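/- arXiv:1711.11066 — 2 statements merged into one kernel-verified Lean document; each statement's English description precedes it below -/
import Mathlib

section
/- Let C be a classifier satisfying ε-fair treatment and ε-predictive parity with respect to a context P with k = |Ψ_P| classes. Then either P satisfies 4(k−1)ε-approximately equal base rates (for all groups X,Y and classes i, μ(Pr[f(σ_X)=i], Pr[f(σ_Y)=i]) ≤ 4(k−1)ε), or C satisfies subgroup perfect prediction over P (there is a proper nonempty subset ψ ⊂ Ψ_P such that {C(O(σ)) | f(σ) ∈ ψ} and {C(O(σ)) | f(σ) ∉ ψ} have disjoint support). -/
open scoped Classical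
open Finset

/-- Multiplicative distance between nonnegative reals, valued in `ℝ≥0∞`. -/
noncomputable def mdist (x y : ℝ) : ENNReal :=
  if x = 0 ∧ y = 0 then 0
  else if 0 < x ∧ 0 < y then ENNReal.ofReal (Real.log (max (x / y) (y / x)))
  else ⊤

/-- Probability of an event `E` under a finitely supported distribution `D`. -/
noncomputable def pr {S : Type} [Fintype S] (D : S → ℝ) (E : S → Prop) : ℝ :=
  ∑ σ, if E σ then D σ else 0

/-- Conditional probability `Pr[A | B]`, with the convention that it is `0`
when `Pr[B] = 0` (division by zero). -/
noncomputable def cpr {S : Type} [Fintype S] (D : S → ℝ) (A B : S → Prop) : ℝ :=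
  pr D (fun σ => A σ ∧ B σ) / pr D B

/-- `D` is a probability mass function. -/
def IsProb {S : Type} [Fintype S] (D : S → ℝ) : Prop :=
  (∀ σ, 0 ≤ D σ) ∧ ∑ σ, D σ = 1

/-- `ε`-fair treatment: conditioned on each class, the classifier's outcome
distribution is `ε`-close (multiplicatively) between any two groups. -/
def FairTreatment {S Ψ G Θ Ω : Type} [Fintype S] (D : S → ℝ) (f : S → Ψ) (g : S → G)
    (O : S → Θ) (C : Θ → Ω) (ε : ℝ) : Prop :=
  ∀ (X Y : G) (c : Ψ) (o : Ω),
    mdist (cpr D (fun σ => C (O σ) = o) (fun σ => f σ = c ∧ g σ = X))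
          (cpr D (fun σ => C (O σ) = o) (fun σ => f σ = c ∧ g σ = Y)) ≤ ENNReal.ofReal ε

/-- `ε`-predictive parity: conditioned on each outcome, the class distribution
is `ε`-close (multiplicatively) between any two groups. -/
def PredParity {S Ψ G Θ Ω : Type} [Fintype S] (D : S → ℝ) (f : S → Ψ) (g : S → G)
    (O : S → Θ) (C : Θ → Ω) (ε : ℝ) : Prop :=
  ∀ (X Y : G) (o : Ω) (c : Ψ),
    mdist (cpr D (fun σ => f σ = c) (fun σ => C (O σ) = o ∧ g σ = X))
          (cpr D (fun σ => f σ = c) (fun σ => C (O σ) = o ∧ g σ = Y)) ≤ ENNReal.ofReal ε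

/-- Classes `i` and `j` are ambiguous w.r.t. classifier `C`: some outcome arises
with positive probability together with each of the two classes. -/
def Ambiguous {S Ψ Θ Ω : Type} [Fintype S] (D : S → ℝ) (f : S → Ψ)
    (O : S → Θ) (C : Θ → Ω) (i j : Ψ) : Prop :=
  ∃ o : Ω, 0 < pr D (fun σ => f σ = i ∧ C (O σ) = o) ∧
           0 < pr D (fun σ => f σ = j ∧ C (O σ) = o)

/-- Subgroup perfect prediction: there is a proper nonempty subset `ψ` of classes
such that the outcome distributions conditioned on `ψ` and on its complement
have disjoint supports. -/
def SubgroupPP {S Ψ Θ Ω : Type} [Fintype S] (D : S → ℝ) (f : S → Ψ)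
    (O : S → Θ) (C : Θ → Ω) : Prop :=
  ∃ ψ : Set Ψ, ψ.Nonempty ∧ ψ ≠ Set.univ ∧
    ∀ o : Ω, ¬ (0 < pr D (fun σ => f σ ∈ ψ ∧ C (O σ) = o) ∧
                0 < pr D (fun σ => f σ ∉ ψ ∧ C (O σ) = o))

/-!
Without subgroup perfect prediction the ambiguity graph on classes (two classes are adjacent when
some outcome occurs with positive probability in both) is connected, and predictive parity makes
every class occur in every group. If classes `i` and `j` share the outcome `o`, Bayes' rule gives
`log Pr[c | Z] = log Pr[c | o, Z] - log Pr[o | c, Z] + log Pr[o | Z]` for `c = i, j`: predictive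
parity and fair treatment bound the change of the first two terms between groups `X` and `Y` by
`ε` each, and the last term does not depend on `c`. So the log-ratios
`L c = log Pr[c | X] - log Pr[c | Y]` of adjacent classes differ by at most `4ε`, and along paths
of at most `k - 1` edges all of them lie within `4(k - 1)ε` of each other. As both base-rate
vectors sum to one, some `L c` is nonnegative and some is nonpositive, whence `|L i| ≤ 4(k - 1)ε`.
-/

section Probability

variable {S : Type} [Fintype S] {D : S → ℝ} {A B Z E E' : S → Prop}

lemma pr_nonneg (hD : ∀ σ, 0 ≤ D σ) : 0 ≤ pr D E :=
  Finset.sum_nonneg fun σ _ => by split_ifs <;> simp [hD σ]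

lemma pr_mono (hD : ∀ σ, 0 ≤ D σ) (h : ∀ σ, E σ → E' σ) : pr D E ≤ pr D E' :=
  Finset.sum_le_sum fun σ _ => by
    by_cases hE : E σ
    · simp [hE, h σ hE]
    · split_ifs <;> simp [hD σ]

lemma pr_pos_iff (hD : ∀ σ, 0 ≤ D σ) : 0 < pr D E ↔ ∃ σ, E σ ∧ 0 < D σ := by
  rw [pr, Finset.sum_pos_iff_of_nonneg fun σ _ => by split_ifs <;> simp [hD σ]]
  refine exists_congr fun σ => ?_
  split_ifs with hE <;> simp [hE]

lemma cpr_pos_iff (hD : ∀ σ, 0 ≤ D σ) : 0 < cpr D A B ↔ 0 < pr D (fun σ => A σ ∧ B σ) := by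
  refine ⟨fun h => (pr_nonneg hD).lt_of_ne fun h0 => ?_, fun h => ?_⟩
  · rw [cpr, ← h0, zero_div] at h
    exact h.false
  · exact div_pos h (h.trans_le (pr_mono hD fun σ hσ => hσ.2))

lemma cpr_nonneg (hD : ∀ σ, 0 ≤ D σ) : 0 ≤ cpr D A B :=
  div_nonneg (pr_nonneg hD) (pr_nonneg hD)

lemma sum_cpr_eq_one {Ψ : Type} [Fintype Ψ] (f : S → Ψ) (hB : pr D B ≠ 0) :
    ∑ c, cpr D (fun σ => f σ = c) B = 1 := by
  have hpart : ∑ c, pr D (fun σ => f σ = c ∧ B σ) = pr D B := by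
    simp only [pr]
    rw [Finset.sum_comm]
    refine Finset.sum_congr rfl fun σ _ => ?_
    by_cases hσ : B σ <;> simp [hσ]
  simp only [cpr]
  rw [← Finset.sum_div, hpart, div_self hB]

lemma log_cpr_eq_bayes (hD : ∀ σ, 0 ≤ D σ) (h : 0 < pr D (fun σ => A σ ∧ B σ ∧ Z σ)) :
    Real.log (cpr D A Z) = Real.log (cpr D A (fun σ => B σ ∧ Z σ))
      - Real.log (cpr D B (fun σ => A σ ∧ Z σ)) + Real.log (cpr D B Z) := by
  have hAZ : 0 < pr D (fun σ => A σ ∧ Z σ) := h.trans_le (pr_mono hD fun σ hσ => ⟨hσ.1, hσ.2.2⟩)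
  have hBZ : 0 < pr D (fun σ => B σ ∧ Z σ) := h.trans_le (pr_mono hD fun σ hσ => hσ.2)
  have hZ : 0 < pr D Z := hBZ.trans_le (pr_mono hD fun σ hσ => hσ.2)
  have hBAZ : pr D (fun σ => B σ ∧ A σ ∧ Z σ) = pr D (fun σ => A σ ∧ B σ ∧ Z σ) := by
    congr 1 with σ
    exact and_left_comm
  simp only [cpr, hBAZ]
  rw [Real.log_div hAZ.ne' hZ.ne', Real.log_div h.ne' hBZ.ne', Real.log_div h.ne' hAZ.ne',
    Real.log_div hBZ.ne' hZ.ne']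
  ring

end Probability

section MultiplicativeDistance

variable {x y ε : ℝ}

lemma mdist_le_ofReal_iff (hx : 0 < x) (hy : 0 < y) (hε : 0 ≤ ε) :
    mdist x y ≤ ENNReal.ofReal ε ↔ |Real.log x - Real.log y| ≤ ε := by
  have hlog : Real.log (max (x / y) (y / x)) = |Real.log x - Real.log y| := by
    rw [abs_eq_max_neg, neg_sub, ← Real.log_div hx.ne' hy.ne', ← Real.log_div hy.ne' hx.ne']
    rcases le_total (x / y) (y / x) with h | h
    · rw [max_eq_right h, max_eq_right (Real.log_le_log (by positivity) h)]
    · rw [max_eq_left h, max_eq_left (Real.log_le_log (by positivity) h)]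
  rw [mdist, if_neg fun h => hx.ne' h.1, if_pos ⟨hx, hy⟩, ENNReal.ofReal_le_ofReal_iff hε, hlog]

lemma pos_of_mdist_le_ofReal (hx : 0 < x) (hy : 0 ≤ y) (h : mdist x y ≤ ENNReal.ofReal ε) :
    0 < y := by
  refine hy.lt_of_ne fun hy0 => (ENNReal.ofReal_ne_top (r := ε)) (top_le_iff.mp ?_)
  rwa [mdist, if_neg fun h => hx.ne' h.1, if_neg fun h => h.2.ne' hy0.symm] at h

end MultiplicativeDistance

namespace SimpleGraph

variable {V : Type*} {G : SimpleGraph V} {L : V → ℝ} {δ : ℝ}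

lemma reachable_of_forall_exists_adj_compl
    (h : ∀ s : Set V, s.Nonempty → s ≠ Set.univ → ∃ a ∈ s, ∃ b ∉ s, G.Adj a b) (u v : V) :
    G.Reachable u v := by
  by_contra huv
  obtain ⟨a, hua, b, hub, hab⟩ :=
    h {w | G.Reachable u w} ⟨u, Reachable.refl u⟩ fun hs => huv (Set.eq_univ_iff_forall.mp hs v)
  exact hub (Reachable.trans hua hab.reachable)

lemma Walk.abs_sub_le_length_mul (hL : ∀ a b, G.Adj a b → |L a - L b| ≤ δ) {u v : V}
    (p : G.Walk u v) : |L u - L v| ≤ p.length * δ := by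
  induction p with
  | nil => simp
  | cons hab _ ih =>
    rw [Walk.length_cons, Nat.cast_succ]
    calc _ ≤ |L _ - L _| + |L _ - L _| := abs_sub_le _ _ _
      _ ≤ δ + _ := add_le_add (hL _ _ hab) ih
      _ = _ := by ring

lemma Reachable.abs_sub_le_card_sub_one_mul [Fintype V] (hδ : 0 ≤ δ)
    (hL : ∀ a b, G.Adj a b → |L a - L b| ≤ δ) {u v : V} (huv : G.Reachable u v) :
    |L u - L v| ≤ (Fintype.card V - 1) * δ := by
  obtain ⟨p, hp⟩ := huv.exists_isPath
  have hlen : (p.length : ℝ) ≤ Fintype.card V - 1 := by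
    have := hp.length_lt
    rw [le_sub_iff_add_le]
    exact_mod_cast this
  exact (p.abs_sub_le_length_mul hL).trans (mul_le_mul_of_nonneg_right hlen hδ)

end SimpleGraph

lemma abs_log_sub_log_le_of_sum_eq {ι : Type*} [Fintype ι] {x y : ι → ℝ}
    (hx : ∀ c, 0 < x c) (hy : ∀ c, 0 < y c) (hsum : ∑ c, x c = ∑ c, y c) {K : ℝ} (i : ι)
    (h : ∀ c, |(Real.log (x i) - Real.log (y i)) - (Real.log (x c) - Real.log (y c))| ≤ K) :
    |Real.log (x i) - Real.log (y i)| ≤ K := by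
  obtain ⟨m, -, hm⟩ := Finset.exists_le_of_sum_le ⟨i, Finset.mem_univ i⟩ hsum.ge
  obtain ⟨m', -, hm'⟩ := Finset.exists_le_of_sum_le ⟨i, Finset.mem_univ i⟩ hsum.le
  have h₁ := Real.log_le_log (hy m) hm
  have h₂ := Real.log_le_log (hx m') hm'
  have h₃ := abs_le.mp (h m)
  have h₄ := abs_le.mp (h m')
  exact abs_le.mpr ⟨by linarith, by linarith⟩

section Fairness

variable {S Ψ G Θ Ω : Type} [Fintype S] {D : S → ℝ} {f : S → Ψ} {g : S → G} {O : S → Θ}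
  {C : Θ → Ω} {ε : ℝ}

noncomputable def baseRate (D : S → ℝ) (f : S → Ψ) (g : S → G) (Z : G) (c : Ψ) : ℝ :=
  cpr D (fun σ => f σ = c) (fun σ => g σ = Z)

lemma PredParity.pr_pos_in_group (hpp : PredParity D f g O C ε) (hD : ∀ σ, 0 ≤ D σ)
    {c : Ψ} {o : Ω} (h : 0 < pr D (fun σ => f σ = c ∧ C (O σ) = o)) (Z : G) :
    0 < pr D (fun σ => f σ = c ∧ C (O σ) = o ∧ g σ = Z) := by
  obtain ⟨τ, ⟨hc, ho⟩, hτ⟩ := (pr_pos_iff hD).1 h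
  have hτZ : 0 < cpr D (fun σ => f σ = c) (fun σ => C (O σ) = o ∧ g σ = g τ) :=
    (cpr_pos_iff hD).2 ((pr_pos_iff hD).2 ⟨τ, ⟨hc, ho, rfl⟩, hτ⟩)
  exact (cpr_pos_iff hD).1 (pos_of_mdist_le_ofReal hτZ (cpr_nonneg hD) (hpp _ Z o c))

lemma abs_log_baseRate_sub_sub_le (hD : ∀ σ, 0 ≤ D σ) (hε : 0 ≤ ε)
    (hft : FairTreatment D f g O C ε) (hpp : PredParity D f g O C ε) {c : Ψ} {o : Ω}
    (h : 0 < pr D (fun σ => f σ = c ∧ C (O σ) = o)) (X Y : G) :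
    |(Real.log (baseRate D f g X c) - Real.log (baseRate D f g Y c)) -
      (Real.log (cpr D (fun σ => C (O σ) = o) (fun σ => g σ = X)) -
        Real.log (cpr D (fun σ => C (O σ) = o) (fun σ => g σ = Y)))| ≤ 2 * ε := by
  have hZ := hpp.pr_pos_in_group hD h
  have hp : ∀ Z, 0 < cpr D (fun σ => f σ = c) (fun σ => C (O σ) = o ∧ g σ = Z) :=
    fun Z => (cpr_pos_iff hD).2 (hZ Z)
  have hq : ∀ Z, 0 < cpr D (fun σ => C (O σ) = o) (fun σ => f σ = c ∧ g σ = Z) :=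
    fun Z => (cpr_pos_iff hD).2 ((hZ Z).trans_le (pr_mono hD fun σ hσ => ⟨hσ.2.1, hσ.1, hσ.2.2⟩))
  have hpε := abs_le.mp ((mdist_le_ofReal_iff (hp X) (hp Y) hε).1 (hpp X Y o c))
  have hqε := abs_le.mp ((mdist_le_ofReal_iff (hq X) (hq Y) hε).1 (hft X Y c o))
  rw [baseRate, baseRate, log_cpr_eq_bayes hD (hZ X), log_cpr_eq_bayes hD (hZ Y), abs_le]
  constructor <;> linarith

lemma Ambiguous.abs_sub_log_baseRate_le (hD : ∀ σ, 0 ≤ D σ) (hε : 0 ≤ ε)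
    (hft : FairTreatment D f g O C ε) (hpp : PredParity D f g O C ε) {i j : Ψ}
    (h : Ambiguous D f O C i j) (X Y : G) :
    |(Real.log (baseRate D f g X i) - Real.log (baseRate D f g Y i)) -
      (Real.log (baseRate D f g X j) - Real.log (baseRate D f g Y j))| ≤ 4 * ε := by
  obtain ⟨o, hi, hj⟩ := h
  have hiε := abs_log_baseRate_sub_sub_le hD hε hft hpp hi X Y
  have hjε := abs_log_baseRate_sub_sub_le hD hε hft hpp hj X Y
  calc _ ≤ _ + _ := abs_sub_le _ _ _
    _ ≤ 2 * ε + 2 * ε := add_le_add hiε (by rwa [abs_sub_comm])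
    _ = 4 * ε := by ring

lemma exists_ambiguous_across_of_not_subgroupPP (hD : ∀ σ, 0 ≤ D σ) (h : ¬ SubgroupPP D f O C)
    {s : Set Ψ} (hs : s.Nonempty) (hs' : s ≠ Set.univ) :
    ∃ a ∈ s, ∃ b ∉ s, Ambiguous D f O C a b := by
  by_contra hno
  refine h ⟨s, hs, hs', fun o ⟨hin, hout⟩ => hno ?_⟩
  obtain ⟨σa, ⟨ha, hoa⟩, hσa⟩ := (pr_pos_iff hD).1 hin
  obtain ⟨σb, ⟨hb, hob⟩, hσb⟩ := (pr_pos_iff hD).1 hout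
  exact ⟨f σa, ha, f σb, hb, o, (pr_pos_iff hD).2 ⟨σa, ⟨rfl, hoa⟩, hσa⟩,
    (pr_pos_iff hD).2 ⟨σb, ⟨rfl, hob⟩, hσb⟩⟩

lemma pr_class_pos_of_not_subgroupPP (hD : IsProb D) (h : ¬ SubgroupPP D f O C) (c : Ψ) :
    0 < pr D (fun σ => f σ = c) := by
  by_contra hc
  obtain ⟨σ, -, hσ⟩ := (pr_pos_iff (E := fun _ => True) hD.1).1 (by simp [pr, hD.2])
  refine h ⟨{c | 0 < pr D (fun σ => f σ = c)}, ⟨f σ, (pr_pos_iff hD.1).2 ⟨σ, rfl, hσ⟩⟩,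
    fun huniv => hc (Set.eq_univ_iff_forall.mp huniv c), fun o hboth => ?_⟩
  obtain ⟨τ, ⟨hτ, -⟩, hDτ⟩ := (pr_pos_iff hD.1).1 hboth.2
  exact hτ ((pr_pos_iff hD.1).2 ⟨τ, rfl, hDτ⟩)

lemma baseRate_pos_of_not_subgroupPP (hD : IsProb D) (hpp : PredParity D f g O C ε)
    (h : ¬ SubgroupPP D f O C) (Z : G) (c : Ψ) : 0 < baseRate D f g Z c := by
  obtain ⟨σ, hc, hσ⟩ := (pr_pos_iff hD.1).1 (pr_class_pos_of_not_subgroupPP hD h c)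
  have hco : 0 < pr D (fun τ => f τ = c ∧ C (O τ) = C (O σ)) :=
    (pr_pos_iff hD.1).2 ⟨σ, ⟨hc, rfl⟩, hσ⟩
  exact (cpr_pos_iff hD.1).2
    ((hpp.pr_pos_in_group hD.1 hco Z).trans_le (pr_mono hD.1 fun τ hτ => ⟨hτ.1, hτ.2.2⟩))

lemma sum_baseRate_eq_one [Fintype Ψ] (hD : ∀ σ, 0 ≤ D σ) {Z : G} {i : Ψ}
    (h : 0 < baseRate D f g Z i) : ∑ c, baseRate D f g Z c = 1 :=
  sum_cpr_eq_one f ((cpr_pos_iff hD).1 h |>.trans_le (pr_mono hD fun _ hσ => hσ.2)).ne'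

end Fairness

theorem equal_base_rates_or_subgroupPP {S Ψ G Θ Ω : Type} [Fintype S] [Fintype Ψ]
    (D : S → ℝ) (hD : IsProb D) (f : S → Ψ) (g : S → G) (O : S → Θ) (C : Θ → Ω)
    (ε : ℝ) (hε : 0 ≤ ε)
    (hft : FairTreatment D f g O C ε) (hpp : PredParity D f g O C ε) :
    (∀ (X Y : G) (i : Ψ),
        mdist (cpr D (fun σ => f σ = i) (fun σ => g σ = X))
              (cpr D (fun σ => f σ = i) (fun σ => g σ = Y))
          ≤ ENNReal.ofReal (4 * ((Fintype.card Ψ : ℝ) - 1) * ε))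
    ∨ SubgroupPP D f O C := by
  refine or_iff_not_imp_right.2 fun hspp X Y i => ?_
  have hpos := baseRate_pos_of_not_subgroupPP hD hpp hspp
  let A := SimpleGraph.fromRel (Ambiguous D f O C)
  have hedge : ∀ a b, A.Adj a b → |(Real.log (baseRate D f g X a) - Real.log (baseRate D f g Y a)) -
      (Real.log (baseRate D f g X b) - Real.log (baseRate D f g Y b))| ≤ 4 * ε := by
    rintro a b ⟨-, hab | hba⟩
    · exact hab.abs_sub_log_baseRate_le hD.1 hε hft hpp X Y
    · rw [abs_sub_comm]
      exact hba.abs_sub_log_baseRate_le hD.1 hε hft hpp X Y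
  have hreach : ∀ c, A.Reachable i c := A.reachable_of_forall_exists_adj_compl (fun s hs hs' => by
    obtain ⟨a, ha, b, hb, hab⟩ := exists_ambiguous_across_of_not_subgroupPP hD.1 hspp hs hs'
    exact ⟨a, ha, b, hb, fun h => hb (h ▸ ha), Or.inl hab⟩) i
  have hk : (1 : ℝ) ≤ Fintype.card Ψ := by exact_mod_cast Fintype.card_pos_iff.2 ⟨i⟩
  refine (mdist_le_ofReal_iff (hpos X i) (hpos Y i) (by nlinarith)).2 ?_
  refine abs_log_sub_log_le_of_sum_eq (hpos X) (hpos Y)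
    ((sum_baseRate_eq_one hD.1 (hpos X i)).trans (sum_baseRate_eq_one hD.1 (hpos Y i)).symm) i
    fun c => ?_
  exact ((hreach c).abs_sub_le_card_sub_one_mul (by positivity) hedge).trans_eq (by ring)
end

section
/- (Splitting lemma.) Suppose C satisfies ε-fair treatment and ε-predictive parity with respect to P = (D, f, g, O), and Ψ' ⊆ Ψ_P is a set of classes such that the event C(O(σ)) ∈ Ω' holds if and only if f(σ) ∈ Ψ' for some set of outcomes Ω'. Let D' be D conditioned on f(σ) ∈ Ψ'. Then C also satisfies ε-fair treatment and ε-predictive parity with respect to the restricted context P' = (D', f, g, O). -/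
open scoped Classical
open Finset

/-
Conditioning `D` on `F := {f σ ∈ Ψ'}` rescales it on `F` by `1 / Pr[F]`, so a conditional
probability under `D'` is the conditional probability under `D` with `F` added to the
conditioning event. Every conditioning event in the two fairness notions is of the form
`B ∧ (g σ = X)` where `B` (a class `f σ = c`, or an outcome `C (O σ) = o`) lies, up to null
sets, either inside `F` or inside its complement: in the first case adding `F` changes nothing,
in the second every conditional probability under `D'` vanishes and the distance is `0`.
-/

section Restriction

variable {S : Type} [Fintype S]

theorem pr_congr_of_ne_zero {D : S → ℝ} {E E' : S → Prop}
    (h : ∀ σ, D σ ≠ 0 → (E σ ↔ E' σ)) : pr D E = pr D E' := by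
  refine Finset.sum_congr rfl fun σ _ => ?_
  by_cases hσ : D σ = 0
  · simp [hσ]
  · simp only [h σ hσ]

theorem pr_eq_zero_of_ne_zero {D : S → ℝ} {E : S → Prop}
    (h : ∀ σ, D σ ≠ 0 → ¬E σ) : pr D E = 0 := by
  rw [pr_congr_of_ne_zero (E' := fun _ => False) fun σ hσ => iff_false_intro (h σ hσ)]
  simp [pr]

theorem pr_of_eq_ite_div {D D' : S → ℝ} {F : S → Prop} {Z : ℝ}
    (hD' : ∀ σ, D' σ = if F σ then D σ / Z else 0) (E : S → Prop) :
    pr D' E = pr D (fun σ => E σ ∧ F σ) / Z := by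
  simp only [pr, hD', Finset.sum_div]
  refine Finset.sum_congr rfl fun σ _ => ?_
  by_cases hE : E σ <;> by_cases hF : F σ <;> simp [hE, hF]

theorem cpr_of_eq_ite_div {D D' : S → ℝ} {F : S → Prop} {Z : ℝ}
    (hD' : ∀ σ, D' σ = if F σ then D σ / Z else 0) (hZ : Z ≠ 0) (A B : S → Prop) :
    cpr D' A B = cpr D A (fun σ => B σ ∧ F σ) := by
  simp only [cpr, pr_of_eq_ite_div hD', div_div_div_cancel_right₀ hZ, and_assoc]

theorem cpr_and_of_imp {D : S → ℝ} {A B F : S → Prop} (h : ∀ σ, D σ ≠ 0 → B σ → F σ) :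
    cpr D A (fun σ => B σ ∧ F σ) = cpr D A B := by
  unfold cpr
  rw [pr_congr_of_ne_zero fun σ hσ => and_iff_left_of_imp (h σ hσ),
    pr_congr_of_ne_zero fun σ hσ => and_congr_right_iff.2 fun _ =>
      and_iff_left_of_imp (h σ hσ)]

theorem cpr_and_of_imp_not {D : S → ℝ} {A B F : S → Prop} (h : ∀ σ, D σ ≠ 0 → B σ → ¬F σ) :
    cpr D A (fun σ => B σ ∧ F σ) = 0 := by
  rw [cpr, pr_eq_zero_of_ne_zero (E := fun σ => B σ ∧ F σ) fun σ hσ hBF => h σ hσ hBF.1 hBF.2,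
    div_zero]

theorem mdist_zero_zero : mdist 0 0 = 0 := by
  simp [mdist]

theorem mdist_cpr_le_of_eq_ite_div {D D' : S → ℝ} {F A B H₁ H₂ : S → Prop} {Z : ℝ}
    {r : ENNReal} (hD' : ∀ σ, D' σ = if F σ then D σ / Z else 0) (hZ : Z ≠ 0)
    (hB : (∀ σ, D σ ≠ 0 → B σ → F σ) ∨ (∀ σ, D σ ≠ 0 → B σ → ¬F σ))
    (h : mdist (cpr D A (fun σ => B σ ∧ H₁ σ)) (cpr D A (fun σ => B σ ∧ H₂ σ)) ≤ r) :
    mdist (cpr D' A (fun σ => B σ ∧ H₁ σ)) (cpr D' A (fun σ => B σ ∧ H₂ σ)) ≤ r := by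
  rw [cpr_of_eq_ite_div hD' hZ, cpr_of_eq_ite_div hD' hZ]
  rcases hB with hB | hB
  · rwa [cpr_and_of_imp fun σ hσ hBH => hB σ hσ hBH.1,
      cpr_and_of_imp fun σ hσ hBH => hB σ hσ hBH.1]
  · rw [cpr_and_of_imp_not fun σ hσ hBH => hB σ hσ hBH.1,
      cpr_and_of_imp_not fun σ hσ hBH => hB σ hσ hBH.1, mdist_zero_zero]
    exact bot_le

end Restriction

theorem splitting_lemma_general {S Ψ G Θ Ω : Type} [Fintype S]
    (D : S → ℝ) (hD : IsProb D) (f : S → Ψ) (g : S → G) (O : S → Θ) (C : Θ → Ω)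
    (ε : ℝ) (hft : FairTreatment D f g O C ε) (hpp : PredParity D f g O C ε)
    (Ψ' : Set Ψ) (Ω' : Set Ω)
    (hiff : ∀ σ, 0 < D σ → (C (O σ) ∈ Ω' ↔ f σ ∈ Ψ'))
    (hpos : 0 < pr D (fun σ => f σ ∈ Ψ'))
    (D' : S → ℝ)
    (hD' : ∀ σ, D' σ = if f σ ∈ Ψ' then D σ / pr D (fun τ => f τ ∈ Ψ') else 0) :
    FairTreatment D' f g O C ε ∧ PredParity D' f g O C ε := by
  have hZ : pr D (fun τ => f τ ∈ Ψ') ≠ 0 := hpos.ne'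
  have hsupp : ∀ σ, D σ ≠ 0 → 0 < D σ := fun σ hσ => (hD.1 σ).lt_of_ne' hσ
  refine ⟨fun X Y c o => mdist_cpr_le_of_eq_ite_div hD' hZ ?_ (hft X Y c o),
    fun X Y o c => mdist_cpr_le_of_eq_ite_div hD' hZ ?_ (hpp X Y o c)⟩
  · by_cases hc : c ∈ Ψ'
    · exact Or.inl fun σ _ hσc => hσc ▸ hc
    · exact Or.inr fun σ _ hσc => hσc ▸ hc
  · by_cases ho : o ∈ Ω'
    · exact Or.inl fun σ hσ hσo => (hiff σ (hsupp σ hσ)).1 (hσo ▸ ho)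
    · exact Or.inr fun σ hσ hσo hf => ho (hσo ▸ (hiff σ (hsupp σ hσ)).2 hf)

theorem splitting_lemma {S Ψ G Θ Ω : Type} [Fintype S]
    (D : S → ℝ) (hD : IsProb D) (f : S → Ψ) (g : S → G) (O : S → Θ) (C : Θ → Ω)
    (ε : ℝ) (hft : FairTreatment D f g O C ε) (hpp : PredParity D f g O C ε)
    (Ψ' : Set Ψ) (Ω' : Set Ω)
    (hiff : ∀ σ, 0 < D σ → (C (O σ) ∈ Ω' ↔ f σ ∈ Ψ'))
    (hpos : 0 < pr D (fun σ => f σ ∈ Ψ'))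
    (D' : S → ℝ)
    (hD' : ∀ σ, D' σ = if f σ ∈ Ψ' then D σ / pr D (fun τ => f τ ∈ Ψ') else 0)
    (hgrp : ∀ X : G, 0 < pr D' (fun σ => g σ = X)) :
    FairTreatment D' f g O C ε ∧ PredParity D' f g O C ε :=
  splitting_lemma_general D hD f g O C ε hft hpp Ψ' Ω' hiff hpos D' hD'
end
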